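/- arXiv:2503.06350 — 2 statements merged into one kernel-verified Lean document; each statement's English description precedes it below -/
import Mathlib

section
/- Let (g_n) be a sequence of functions of bounded variation on [0,1] with total variation uniformly bounded by 1 and g_n(0) uniformly bounded. Then there exists a subsequence (g_{n_k}) and a function g of bounded variation on [0,1] such that for every continuous function f : [0,1] → ℝ, the Riemann–Stieltjes integrals ∫₀¹ f dg_{n_k} converge to ∫₀¹ f dg. -/
open Filter Set Topology

/-- `IsRSIntegral f g I` : the Riemann–Stieltjes integral `∫₀¹ f dg` exists and equals `I`,
in the sense of convergence of Riemann–Stieltjes sums over tagged partitions of `[0,1]`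
with mesh tending to zero. -/
def IsRSIntegral (f g : ℝ → ℝ) (I : ℝ) : Prop :=
  ∀ ε : ℝ, 0 < ε → ∃ δ : ℝ, 0 < δ ∧
    ∀ (n : ℕ) (t τ : ℕ → ℝ), t 0 = 0 → t n = 1 →
      (∀ i < n, t i ≤ t (i + 1)) → (∀ i < n, t (i + 1) - t i < δ) →
      (∀ i < n, τ i ∈ Set.Icc (t i) (t (i + 1))) →
      |(∑ i ∈ Finset.range n, f (τ i) * (g (t (i + 1)) - g (t i))) - I| < ε

namespace HellyAux

/-- Riemann–Stieltjes sum. -/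
noncomputable def RS (f g : ℝ → ℝ) (n : ℕ) (t τ : ℕ → ℝ) : ℝ :=
  ∑ i ∈ Finset.range n, f (τ i) * (g (t (i + 1)) - g (t i))

/-- A (not necessarily strict) partition of `[0,1]`. -/
structure Part (n : ℕ) (t : ℕ → ℝ) : Prop where
  h0 : t 0 = 0
  h1 : t n = 1
  step : ∀ i < n, t i ≤ t (i + 1)

theorem mono_of_step {α : Type*} [Preorder α] {t : ℕ → α} {n : ℕ}
    (h : ∀ i < n, t i ≤ t (i + 1)) : ∀ ⦃i j : ℕ⦄, i ≤ j → j ≤ n → t i ≤ t j := by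
  intro i j hij hjn
  induction j with
  | zero => simp_all
  | succ j ih =>
    rcases Nat.eq_or_lt_of_le hij with rfl | hlt
    · exact le_rfl
    · exact (ih (Nat.lt_succ_iff.mp hlt) (le_of_lt hjn)).trans (h j hjn)

theorem Part.mono {n : ℕ} {t : ℕ → ℝ} (h : Part n t) :
    ∀ ⦃i j : ℕ⦄, i ≤ j → j ≤ n → t i ≤ t j := mono_of_step h.step

theorem Part.mem {n : ℕ} {t : ℕ → ℝ} (h : Part n t) {i : ℕ} (hi : i ≤ n) :
    t i ∈ Icc (0 : ℝ) 1 :=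
  ⟨h.h0 ▸ h.mono (Nat.zero_le i) hi, h.h1 ▸ h.mono hi le_rfl⟩

/-- Sums of absolute increments over a partition are bounded by the total variation. -/
theorem sum_abs_le {g : ℝ → ℝ} (hg : eVariationOn g (Icc (0:ℝ) 1) ≠ ⊤)
    {n : ℕ} {t : ℕ → ℝ} (h : Part n t) :
    ∑ i ∈ Finset.range n, |g (t (i + 1)) - g (t i)| ≤ (eVariationOn g (Icc (0:ℝ) 1)).toReal := by
  set u : ℕ → ℝ := fun j => t (min j n) with hu_def
  have hu : Monotone u := fun a b hab =>
    h.mono (min_le_min_right n hab) (min_le_right b n)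
  have us : ∀ j, u j ∈ Icc (0:ℝ) 1 := fun j => h.mem (min_le_right j n)
  have key := eVariationOn.sum_le (f := g) (n := n) hu us
  have hrw : ∀ i ∈ Finset.range n,
      edist (g (u (i + 1))) (g (u i)) = ENNReal.ofReal |g (t (i + 1)) - g (t i)| := by
    intro i hi
    rw [Finset.mem_range] at hi
    have h1 : min (i + 1) n = i + 1 := min_eq_left hi
    have h2 : min i n = i := min_eq_left hi.le
    simp only [hu_def, h1, h2, edist_dist, Real.dist_eq]
  rw [Finset.sum_congr rfl hrw, ← ENNReal.ofReal_sum_of_nonneg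
    (fun i _ => abs_nonneg _)] at key
  have := ENNReal.toReal_mono hg key
  rwa [ENNReal.toReal_ofReal (Finset.sum_nonneg fun i _ => abs_nonneg _)] at this


theorem tele (G : ℕ → ℝ) {a b : ℕ} (h : a ≤ b) :
    ∑ j ∈ Finset.Ico a b, (G (j + 1) - G j) = G b - G a := by
  rw [Finset.sum_Ico_eq_sub _ h, Finset.sum_range_sub, Finset.sum_range_sub]
  ring

theorem sum_split (F : ℕ → ℝ) (k : ℕ → ℕ) (n : ℕ) (hk0 : k 0 = 0)
    (hkm : ∀ i < n, k i ≤ k (i + 1)) :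
    ∑ j ∈ Finset.range (k n), F j = ∑ i ∈ Finset.range n, ∑ j ∈ Finset.Ico (k i) (k (i + 1)), F j := by
  induction n with
  | zero => simp [hk0]
  | succ n ih =>
    rw [Finset.sum_range_succ, ← ih (fun i hi => hkm i (hi.trans (Nat.lt_succ_self n)))]
    rw [Finset.range_eq_Ico,
      ← Finset.sum_Ico_consecutive F (Nat.zero_le (k n)) (hkm n (Nat.lt_succ_self n)),
      ← Finset.range_eq_Ico]



/-- Key refinement estimate: an RS sum over a coarse tagged partition with mesh `≤ δ`
differs from the RS sum over any refinement by at most `ε * V`. -/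
theorem refine_est (f g : ℝ → ℝ) {ε δ : ℝ} (hε : 0 ≤ ε)
    (hf : ∀ x ∈ Icc (0:ℝ) 1, ∀ y ∈ Icc (0:ℝ) 1, |x - y| ≤ δ → |f x - f y| ≤ ε)
    {n : ℕ} {t τ : ℕ → ℝ} (ht : Part n t) (hmesh : ∀ i < n, t (i + 1) - t i ≤ δ)
    (hτ : ∀ i < n, τ i ∈ Icc (t i) (t (i + 1)))
    {m : ℕ} {s σ : ℕ → ℝ} (hs : Part m s) (hσ : ∀ j < m, σ j ∈ Icc (s j) (s (j + 1)))
    {k : ℕ → ℕ} (hk0 : k 0 = 0) (hkn : k n = m) (hkm : ∀ i < n, k i ≤ k (i + 1))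
    (hag : ∀ i ≤ n, s (k i) = t i)
    {V : ℝ} (hV : ∑ j ∈ Finset.range m, |g (s (j + 1)) - g (s j)| ≤ V) :
    |RS f g n t τ - RS f g m s σ| ≤ ε * V := by
  have hkmono : ∀ ⦃i j : ℕ⦄, i ≤ j → j ≤ n → k i ≤ k j := mono_of_step hkm
  -- each refined index j < m lies in a block
  have hblock : ∀ i < n, ∀ j ∈ Finset.Ico (k i) (k (i + 1)),
      t i ≤ s j ∧ s (j + 1) ≤ t (i + 1) ∧ j < m := by
    intro i hi j hj
    rw [Finset.mem_Ico] at hj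
    have hj2 : j < m := lt_of_lt_of_le hj.2 (hkn ▸ hkmono hi le_rfl)
    constructor
    · rw [← hag i hi.le]
      exact hs.mono hj.1 hj2.le
    refine ⟨?_, hj2⟩
    · rw [← hag (i + 1) hi]
      exact hs.mono hj.2 ((hkn ▸ hkmono hi le_rfl : k (i+1) ≤ m))
  -- rewrite coarse RS sum as a double sum
  have e1 : RS f g n t τ
      = ∑ i ∈ Finset.range n, ∑ j ∈ Finset.Ico (k i) (k (i + 1)),
          f (τ i) * (g (s (j + 1)) - g (s j)) := by
    unfold RS
    refine Finset.sum_congr rfl fun i hi => ?_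
    rw [Finset.mem_range] at hi
    rw [← Finset.mul_sum, tele (fun j => g (s j)) (hkm i hi), hag i hi.le, hag (i + 1) hi]
  have e2 : RS f g m s σ
      = ∑ i ∈ Finset.range n, ∑ j ∈ Finset.Ico (k i) (k (i + 1)),
          f (σ j) * (g (s (j + 1)) - g (s j)) := by
    unfold RS
    rw [← hkn, sum_split _ k n hk0 hkm]
  rw [e1, e2, ← Finset.sum_sub_distrib]
  have habs : ∀ i ∈ Finset.range n,
      |∑ j ∈ Finset.Ico (k i) (k (i + 1)),
          f (τ i) * (g (s (j + 1)) - g (s j)) -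
        ∑ j ∈ Finset.Ico (k i) (k (i + 1)),
          f (σ j) * (g (s (j + 1)) - g (s j))|
      ≤ ∑ j ∈ Finset.Ico (k i) (k (i + 1)), ε * |g (s (j + 1)) - g (s j)| := by
    intro i hi
    rw [Finset.mem_range] at hi
    rw [← Finset.sum_sub_distrib]
    refine (Finset.abs_sum_le_sum_abs _ _).trans (Finset.sum_le_sum fun j hj => ?_)
    obtain ⟨hj1, hj2, hj3⟩ := hblock i hi j hj
    have hsj : s j ∈ Icc (t i) (t (i + 1)) :=
      ⟨hj1, (hs.step j hj3).trans hj2⟩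
    have hsj1 : s (j + 1) ∈ Icc (t i) (t (i + 1)) := ⟨hj1.trans (hs.step j hj3), hj2⟩
    have hσj : σ j ∈ Icc (t i) (t (i + 1)) :=
      ⟨hsj.1.trans (hσ j hj3).1, (hσ j hj3).2.trans hsj1.2⟩
    have hτi := hτ i hi
    have hIcc : Icc (t i) (t (i + 1)) ⊆ Icc (0:ℝ) 1 :=
      Icc_subset_Icc (ht.mem hi.le).1 (ht.mem hi).2
    have hdist : |τ i - σ j| ≤ δ := by
      have h1 := hτi.1; have h2 := hτi.2; have h3 := hσj.1; have h4 := hσj.2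
      have := hmesh i hi
      rw [abs_le]; constructor <;> linarith
    have hfb : |f (τ i) - f (σ j)| ≤ ε := hf _ (hIcc hτi) _ (hIcc hσj) hdist
    calc |f (τ i) * (g (s (j + 1)) - g (s j)) - f (σ j) * (g (s (j + 1)) - g (s j))|
        = |f (τ i) - f (σ j)| * |g (s (j + 1)) - g (s j)| := by
          rw [← sub_mul, abs_mul]
      _ ≤ ε * |g (s (j + 1)) - g (s j)| :=
          mul_le_mul_of_nonneg_right hfb (abs_nonneg _)
  refine (Finset.abs_sum_le_sum_abs _ _).trans ((Finset.sum_le_sum habs).trans ?_)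
  have : ∑ i ∈ Finset.range n, ∑ j ∈ Finset.Ico (k i) (k (i + 1)),
      ε * |g (s (j + 1)) - g (s j)|
      = ε * ∑ j ∈ Finset.range m, |g (s (j + 1)) - g (s j)| := by
    rw [← hkn, sum_split _ k n hk0 hkm, Finset.mul_sum]
    exact Finset.sum_congr rfl fun i _ => by rw [Finset.mul_sum]
  rw [this]
  exact mul_le_mul_of_nonneg_left hV hε


/-- Common refinement of two partitions. -/
theorem merge {n : ℕ} {t : ℕ → ℝ} (ht : Part n t) {m : ℕ} {s : ℕ → ℝ} (hs : Part m s) :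
    ∃ (M : ℕ) (r : ℕ → ℝ) (k l : ℕ → ℕ), Part M r ∧
      (k 0 = 0 ∧ k n = M ∧ (∀ i < n, k i ≤ k (i + 1)) ∧ ∀ i ≤ n, r (k i) = t i) ∧
      (l 0 = 0 ∧ l m = M ∧ (∀ j < m, l j ≤ l (j + 1)) ∧ ∀ j ≤ m, r (l j) = s j) := by
  classical
  set B : Finset ℝ := (Finset.range (n+1)).image t ∪ (Finset.range (m+1)).image s with hB
  have htB : ∀ i ≤ n, t i ∈ B := fun i hi => Finset.mem_union_left _
    (Finset.mem_image_of_mem t (Finset.mem_range.mpr (Nat.lt_succ_of_le hi)))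
  have hsB : ∀ j ≤ m, s j ∈ B := fun j hj => Finset.mem_union_right _
    (Finset.mem_image_of_mem s (Finset.mem_range.mpr (Nat.lt_succ_of_le hj)))
  have hBsub : ∀ a ∈ B, a ∈ Icc (0:ℝ) 1 := by
    intro a ha
    rw [hB, Finset.mem_union] at ha
    rcases ha with h | h <;> rw [Finset.mem_image] at h <;> obtain ⟨i, hi, rfl⟩ := h
    · exact ht.mem (Nat.lt_succ_iff.mp (Finset.mem_range.mp hi))
    · exact hs.mem (Nat.lt_succ_iff.mp (Finset.mem_range.mp hi))
  have hne : B.Nonempty := ⟨t 0, htB 0 (Nat.zero_le n)⟩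
  have hpos : 0 < B.card := Finset.card_pos.mpr hne
  set M := B.card - 1 with hM
  have hc : B.card = M + 1 := (Nat.succ_pred_eq_of_pos hpos).symm
  set emb := B.orderEmbOfFin hc with hemb
  set r : ℕ → ℝ := fun j => if h : j < M + 1 then emb ⟨j, h⟩ else 1 with hr
  have hrange : Set.range emb = (B : Set ℝ) := B.range_orderEmbOfFin hc
  have hidx : ∀ a ∈ B, ∃ jb : Fin (M+1), emb jb = a := by
    intro a ha
    have : a ∈ Set.range emb := by rw [hrange]; exact Finset.mem_coe.mpr ha
    exact this
  set idx : ℝ → ℕ := fun a => if h : a ∈ B then (((hidx a h).choose : Fin (M+1)) : ℕ) else 0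
    with hidxdef
  have hidx2 : ∀ a ∈ B, idx a < M + 1 ∧ r (idx a) = a := by
    intro a ha
    have hch := (hidx a ha).choose_spec
    have hlt : idx a < M + 1 := by
      simp only [hidxdef, dif_pos ha]; exact (hidx a ha).choose.isLt
    refine ⟨hlt, ?_⟩
    simp only [hr, dif_pos hlt]
    have hfe : (⟨idx a, hlt⟩ : Fin (M+1)) = (hidx a ha).choose := by
      apply Fin.ext
      simp only [hidxdef, dif_pos ha]
    rw [hfe]; exact hch
  have h0B : (0:ℝ) ∈ B := ht.h0 ▸ htB 0 (Nat.zero_le n)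
  have h1B : (1:ℝ) ∈ B := ht.h1 ▸ htB n le_rfl
  have hmin : B.min' hne = 0 :=
    le_antisymm (Finset.min'_le _ _ h0B) (hBsub _ (B.min'_mem hne)).1
  have hmax : B.max' hne = 1 :=
    le_antisymm (hBsub _ (B.max'_mem hne)).2 (Finset.le_max' _ _ h1B)
  have hr0 : r 0 = 0 := by
    simp only [hr, dif_pos (Nat.succ_pos M)]
    rw [Finset.orderEmbOfFin_zero hc (Nat.succ_pos M)]
    exact hmin
  have hrM : r M = 1 := by
    simp only [hr, dif_pos (Nat.lt_succ_self M)]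
    have h := Finset.orderEmbOfFin_last hc (Nat.succ_pos M)
    calc emb ⟨M, Nat.lt_succ_self M⟩ = B.max' _ := h
    _ = 1 := hmax
  have hrmono : ∀ a b : ℕ, a ≤ b → b ≤ M → r a ≤ r b := by
    intro a b hab hbM
    have ha' : a < M + 1 := Nat.lt_succ_of_le (hab.trans hbM)
    have hb' : b < M + 1 := Nat.lt_succ_of_le hbM
    simp only [hr, dif_pos ha', dif_pos hb']
    exact emb.monotone (Fin.mk_le_mk.mpr hab)
  have hle : ∀ a b : ℕ, a < M+1 → b < M+1 → r a ≤ r b → a ≤ b := by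
    intro a b ha hb hab
    simp only [hr, dif_pos ha, dif_pos hb] at hab
    exact Fin.mk_le_mk.mp (emb.le_iff_le.mp hab)
  have hinj : ∀ a b : ℕ, a < M+1 → b < M+1 → r a = r b → a = b := fun a b ha hb hab =>
    le_antisymm (hle a b ha hb hab.le) (hle b a hb ha hab.ge)
  have hPart : Part M r :=
    ⟨hr0, hrM, fun j hj => hrmono j (j+1) (Nat.le_succ j) (Nat.succ_le_of_lt hj)⟩
  -- index maps
  refine ⟨M, r, fun i => idx (t (min i n)), fun j => idx (s (min j m)), hPart, ?_, ?_⟩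
  · have hk : ∀ i ≤ n, idx (t i) < M + 1 ∧ r (idx (t i)) = t i := fun i hi =>
      hidx2 _ (htB i hi)
    have hval : ∀ i ≤ n, r (idx (t (min i n))) = t i := by
      intro i hi; rw [min_eq_left hi]; exact (hk i hi).2
    refine ⟨?_, ?_, ?_, hval⟩
    · show idx (t (min 0 n)) = 0
      rw [min_eq_left (Nat.zero_le n)]
      apply hinj _ _ (hk 0 (Nat.zero_le n)).1 (Nat.succ_pos M)
      rw [(hk 0 (Nat.zero_le n)).2, hr0, ht.h0]
    · show idx (t (min n n)) = M
      rw [min_self]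
      apply hinj _ _ (hk n le_rfl).1 (Nat.lt_succ_self M)
      rw [(hk n le_rfl).2, hrM, ht.h1]
    · intro i hi
      show idx (t (min i n)) ≤ idx (t (min (i+1) n))
      rw [min_eq_left hi.le, min_eq_left hi]
      apply hle _ _ (hk i hi.le).1 (hk (i+1) hi).1
      rw [(hk i hi.le).2, (hk (i+1) hi).2]
      exact ht.step i hi
  · have hk : ∀ j ≤ m, idx (s j) < M + 1 ∧ r (idx (s j)) = s j := fun j hj =>
      hidx2 _ (hsB j hj)
    have hval : ∀ j ≤ m, r (idx (s (min j m))) = s j := by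
      intro j hj; rw [min_eq_left hj]; exact (hk j hj).2
    refine ⟨?_, ?_, ?_, hval⟩
    · show idx (s (min 0 m)) = 0
      rw [min_eq_left (Nat.zero_le m)]
      apply hinj _ _ (hk 0 (Nat.zero_le m)).1 (Nat.succ_pos M)
      rw [(hk 0 (Nat.zero_le m)).2, hr0, hs.h0]
    · show idx (s (min m m)) = M
      rw [min_self]
      apply hinj _ _ (hk m le_rfl).1 (Nat.lt_succ_self M)
      rw [(hk m le_rfl).2, hrM, hs.h1]
    · intro j hj
      show idx (s (min j m)) ≤ idx (s (min (j+1) m))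
      rw [min_eq_left hj.le, min_eq_left hj]
      apply hle _ _ (hk j hj.le).1 (hk (j+1) hj).1
      rw [(hk j hj.le).2, (hk (j+1) hj).2]
      exact hs.step j hj


noncomputable def Vr (g : ℝ → ℝ) : ℝ := (eVariationOn g (Icc (0:ℝ) 1)).toReal

theorem Vr_nonneg (g : ℝ → ℝ) : 0 ≤ Vr g := ENNReal.toReal_nonneg

theorem two_est (f g : ℝ → ℝ) (hg : eVariationOn g (Icc (0:ℝ) 1) ≠ ⊤)
    {ε δ : ℝ} (hε : 0 ≤ ε)
    (hf : ∀ x ∈ Icc (0:ℝ) 1, ∀ y ∈ Icc (0:ℝ) 1, |x - y| ≤ δ → |f x - f y| ≤ ε)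
    {n : ℕ} {t τ : ℕ → ℝ} (ht : Part n t) (hmesh : ∀ i < n, t (i + 1) - t i ≤ δ)
    (hτ : ∀ i < n, τ i ∈ Icc (t i) (t (i + 1)))
    {m : ℕ} {s σ : ℕ → ℝ} (hs : Part m s) (hmesh' : ∀ j < m, s (j + 1) - s j ≤ δ)
    (hσ : ∀ j < m, σ j ∈ Icc (s j) (s (j + 1))) :
    |RS f g n t τ - RS f g m s σ| ≤ 2 * ε * Vr g := by
  obtain ⟨M, r, k, l, hr, ⟨hk0, hkn, hkm, hag⟩, ⟨hl0, hln, hlm, hag'⟩⟩ := merge ht hs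
  have hV := sum_abs_le hg hr
  have hσr : ∀ j < M, r j ∈ Icc (r j) (r (j+1)) := fun j hj => ⟨le_rfl, hr.step j hj⟩
  have h1 := refine_est f g hε hf ht hmesh hτ hr hσr hk0 hkn hkm hag hV
  have h2 := refine_est f g hε hf hs hmesh' hσ hr hσr hl0 hln hlm hag' hV
  calc |RS f g n t τ - RS f g m s σ|
      ≤ |RS f g n t τ - RS f g M r r| + |RS f g M r r - RS f g m s σ| := abs_sub_le _ _ _
    _ ≤ ε * Vr g + ε * Vr g := add_le_add h1 (by rw [abs_sub_comm]; exact h2)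
    _ = 2 * ε * Vr g := by ring

theorem exists_modulus {f : ℝ → ℝ} (hf : ContinuousOn f (Icc (0:ℝ) 1)) {ε : ℝ} (hε : 0 < ε) :
    ∃ δ : ℝ, 0 < δ ∧
      ∀ x ∈ Icc (0:ℝ) 1, ∀ y ∈ Icc (0:ℝ) 1, |x - y| ≤ δ → |f x - f y| ≤ ε := by
  have huc : UniformContinuousOn f (Icc 0 1) :=
    isCompact_Icc.uniformContinuousOn_of_continuous hf
  rw [Metric.uniformContinuousOn_iff] at huc
  obtain ⟨δ₀, hδ₀, h⟩ := huc ε hε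
  refine ⟨δ₀/2, by linarith, fun x hx y hy hxy => ?_⟩
  have := h x hx y hy (by rw [Real.dist_eq]; linarith)
  rw [Real.dist_eq] at this
  exact this.le

theorem exists_RS (f g : ℝ → ℝ) (hg : eVariationOn g (Icc (0:ℝ) 1) ≠ ⊤)
    (hf : ContinuousOn f (Icc (0:ℝ) 1)) :
    ∃ I : ℝ, IsRSIntegral f g I ∧
      ∀ ε δ : ℝ, 0 ≤ ε → 0 < δ →
        (∀ x ∈ Icc (0:ℝ) 1, ∀ y ∈ Icc (0:ℝ) 1, |x - y| ≤ δ → |f x - f y| ≤ ε) →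
        ∀ (n : ℕ) (t τ : ℕ → ℝ), Part n t → (∀ i < n, t (i + 1) - t i ≤ δ) →
          (∀ i < n, τ i ∈ Icc (t i) (t (i + 1))) →
          |RS f g n t τ - I| ≤ 2 * ε * Vr g := by
  have hVnn : 0 ≤ Vr g := Vr_nonneg g
  set uP : ℕ → ℕ → ℝ := fun N i => (i:ℝ)/((N:ℝ)) with huP
  have huPart : ∀ N : ℕ, Part (N+1) (uP (N+1)) := by
    intro N
    refine ⟨by simp [huP], ?_, ?_⟩
    · simp only [huP]
      rw [div_self]
      exact_mod_cast Nat.succ_ne_zero N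
    · intro i _
      simp only [huP]
      rw [div_le_div_iff_of_pos_right (by exact_mod_cast Nat.succ_pos N)]
      exact_mod_cast Nat.le_succ i
  have hmeshU : ∀ N : ℕ, ∀ i < N+1, uP (N+1) (i+1) - uP (N+1) i = 1/((N:ℝ)+1) := by
    intro N i _
    simp only [huP]
    push_cast
    ring
  have htagU : ∀ N, ∀ i < N+1, uP (N+1) i ∈ Icc (uP (N+1) i) (uP (N+1) (i+1)) :=
    fun N i hi => ⟨le_rfl, (huPart N).step i hi⟩
  have hmδ : ∀ δ : ℝ, 0 < δ → ∀ N : ℕ, ⌈1/δ⌉₊ ≤ N →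
      ∀ i < N+1, uP (N+1) (i+1) - uP (N+1) i ≤ δ := by
    intro δ hδ N hN i hi
    rw [hmeshU N i hi]
    have h1 : (1:ℝ)/δ ≤ (N:ℝ) := le_trans (Nat.le_ceil _) (by exact_mod_cast hN)
    rw [div_le_iff₀ hδ] at h1
    rw [div_le_iff₀ (by positivity)]
    nlinarith
  set a : ℕ → ℝ := fun N => RS f g (N+1) (uP (N+1)) (uP (N+1)) with ha
  have hcau : CauchySeq a := by
    rw [Metric.cauchySeq_iff]
    intro ε hε
    set ε' := ε / (2 * Vr g + 2) with hε'def
    have hε'pos : 0 < ε' := div_pos hε (by linarith)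
    have hkey : 2 * ε' * Vr g < ε := by
      have h2 : ε' * (2 * Vr g + 2) = ε := div_mul_cancel₀ ε (by linarith)
      nlinarith
    obtain ⟨δ, hδ, hmod⟩ := exists_modulus hf hε'pos
    refine ⟨⌈1/δ⌉₊, fun p hp q hq => ?_⟩
    rw [Real.dist_eq]
    exact lt_of_le_of_lt
      (two_est f g hg hε'pos.le hmod (huPart p) (hmδ δ hδ p hp) (htagU p)
        (huPart q) (hmδ δ hδ q hq) (htagU q)) hkey
  obtain ⟨I, hI⟩ := cauchySeq_tendsto_of_complete hcau
  have hQ : ∀ ε δ : ℝ, 0 ≤ ε → 0 < δ →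
      (∀ x ∈ Icc (0:ℝ) 1, ∀ y ∈ Icc (0:ℝ) 1, |x - y| ≤ δ → |f x - f y| ≤ ε) →
      ∀ (n : ℕ) (t τ : ℕ → ℝ), Part n t → (∀ i < n, t (i + 1) - t i ≤ δ) →
        (∀ i < n, τ i ∈ Icc (t i) (t (i + 1))) →
        |RS f g n t τ - I| ≤ 2 * ε * Vr g := by
    intro ε δ hε hδ hmod n t τ hp hmesh hτ
    have hbound : ∀ᶠ N in atTop, |RS f g n t τ - a N| ≤ 2 * ε * Vr g := by
      filter_upwards [eventually_ge_atTop ⌈1/δ⌉₊] with N hN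
      exact two_est f g hg hε hmod hp hmesh hτ (huPart N) (hmδ δ hδ N hN) (htagU N)
    have hlim : Tendsto (fun N => |RS f g n t τ - a N|) atTop (𝓝 |RS f g n t τ - I|) :=
      (tendsto_const_nhds.sub hI).abs
    exact le_of_tendsto hlim hbound
  refine ⟨I, ?_, hQ⟩
  intro ε hε
  set ε' := ε / (2 * Vr g + 2) with hε'def
  have hε'pos : 0 < ε' := div_pos hε (by linarith)
  have hkey : 2 * ε' * Vr g < ε := by
    have h2 : ε' * (2 * Vr g + 2) = ε := div_mul_cancel₀ ε (by linarith)
    nlinarith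
  obtain ⟨δ, hδ, hmod⟩ := exists_modulus hf hε'pos
  refine ⟨δ, hδ, fun n t τ h0 h1 hstep hmesh hτ => ?_⟩
  have hq := hQ ε' δ hε'pos.le hδ hmod n t τ ⟨h0, h1, hstep⟩
    (fun i hi => (hmesh i hi).le) hτ
  exact lt_of_le_of_lt hq hkey


theorem evar_sub_le (F G : ℝ → ℝ) (s : Set ℝ) :
    eVariationOn (fun x => F x - G x) s ≤ eVariationOn F s + eVariationOn G s := by
  apply iSup_le
  rintro ⟨n, u, hu, us⟩
  calc ∑ i ∈ Finset.range n,
        edist (F (u (i+1)) - G (u (i+1))) (F (u i) - G (u i))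
      ≤ ∑ i ∈ Finset.range n,
        (edist (F (u (i+1))) (F (u i)) + edist (G (u (i+1))) (G (u i))) := by
        refine Finset.sum_le_sum fun i _ => ?_
        rw [edist_dist, edist_dist, edist_dist,
          ← ENNReal.ofReal_add dist_nonneg dist_nonneg]
        apply ENNReal.ofReal_le_ofReal
        simp only [Real.dist_eq]
        calc |F (u (i+1)) - G (u (i+1)) - (F (u i) - G (u i))|
            = |(F (u (i+1)) - F (u i)) - (G (u (i+1)) - G (u i))| := by congr 1; ring
          _ ≤ |F (u (i+1)) - F (u i)| + |G (u (i+1)) - G (u i)| := abs_sub _ _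
    _ = (∑ i ∈ Finset.range n, edist (F (u (i+1))) (F (u i)))
        + ∑ i ∈ Finset.range n, edist (G (u (i+1))) (G (u i)) := Finset.sum_add_distrib
    _ ≤ eVariationOn F s + eVariationOn G s :=
        add_le_add (eVariationOn.sum_le (f := F) (n := n) hu us) (eVariationOn.sum_le (f := G) (n := n) hu us)

end HellyAux

open HellyAux


/-- Helly/Prokhorov selection theorem: from a sequence of BV functions on `[0,1]` with total
variation uniformly bounded by `1` and uniformly bounded initial values, one can extract a
subsequence `g ∘ φ` and a BV limit `g` such that the Riemann–Stieltjes integrals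
`∫₀¹ f d(g (φ k))` converge to `∫₀¹ f dg` for every continuous `f`. -/
theorem stmt1 (g : ℕ → ℝ → ℝ) (C : ℝ)
    (hvar : ∀ n, eVariationOn (g n) (Set.Icc 0 1) ≤ 1)
    (h0 : ∀ n, |g n 0| ≤ C) :
    ∃ (φ : ℕ → ℕ), StrictMono φ ∧
    ∃ glim : ℝ → ℝ, BoundedVariationOn glim (Set.Icc 0 1) ∧
      ∀ f : ℝ → ℝ, ContinuousOn f (Set.Icc 0 1) →
        ∃ (I : ℝ) (J : ℕ → ℝ), IsRSIntegral f glim I ∧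
          (∀ k, IsRSIntegral f (g (φ k)) (J k)) ∧
          Tendsto J atTop (nhds I) := by
  classical
  have hC : 0 ≤ C := le_trans (abs_nonneg _) (h0 0)
  have hgtop : ∀ n, eVariationOn (g n) (Icc (0:ℝ) 1) ≠ ⊤ := fun n =>
    ne_top_of_le_ne_top ENNReal.one_ne_top (hvar n)
  have hbvg : ∀ n, LocallyBoundedVariationOn (g n) (Icc (0:ℝ) 1) := fun n =>
    BoundedVariationOn.locallyBoundedVariationOn (hgtop n)
  have h01 : (0:ℝ) ∈ Icc (0:ℝ) 1 := by constructor <;> norm_num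
  have h11 : (1:ℝ) ∈ Icc (0:ℝ) 1 := by constructor <;> norm_num
  set p : ℕ → ℝ → ℝ := fun n x => variationOnFromTo (g n) (Icc (0:ℝ) 1) 0 x with hpdef
  set q : ℕ → ℝ → ℝ := fun n x => p n x - g n x with hqdef
  have hpmono : ∀ n, MonotoneOn (p n) (Icc (0:ℝ) 1) := fun n =>
    variationOnFromTo.monotoneOn (hbvg n) h01
  have hqmono : ∀ n, MonotoneOn (q n) (Icc (0:ℝ) 1) := by
    intro n x hx y hy hxy
    exact variationOnFromTo.sub_self_monotoneOn (hbvg n) h01 hx hy hxy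
  have hVle1 : ∀ n, Vr (g n) ≤ 1 := fun n => by
    have := ENNReal.toReal_mono ENNReal.one_ne_top (hvar n)
    simpa [Vr] using this
  have hpb : ∀ n, ∀ x ∈ Icc (0:ℝ) 1, p n x ∈ Icc (0:ℝ) 1 := by
    intro n x hx
    constructor
    · exact variationOnFromTo.nonneg_of_le _ _ hx.1
    · have h1 : p n x = (eVariationOn (g n) (Icc (0:ℝ) 1 ∩ Icc 0 x)).toReal := by
        simp only [hpdef]; exact variationOnFromTo.eq_of_le _ _ hx.1
      rw [h1]
      calc (eVariationOn (g n) (Icc (0:ℝ) 1 ∩ Icc 0 x)).toReal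
          ≤ (eVariationOn (g n) (Icc (0:ℝ) 1)).toReal :=
            ENNReal.toReal_mono (hgtop n) (eVariationOn.mono _ inter_subset_left)
        _ ≤ 1 := hVle1 n
  have hgb : ∀ n, ∀ x ∈ Icc (0:ℝ) 1, |g n x| ≤ C + 1 := by
    intro n x hx
    have hd : dist (g n x) (g n 0) ≤ 1 := by
      have h1 : edist (g n x) (g n 0) ≤ eVariationOn (g n) (Icc (0:ℝ) 1) :=
        eVariationOn.edist_le (g n) hx h01
      have h2 := h1.trans (hvar n)
      rw [edist_dist] at h2
      have h3 := ENNReal.toReal_mono ENNReal.one_ne_top h2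
      simpa [ENNReal.toReal_ofReal dist_nonneg] using h3
    rw [Real.dist_eq] at hd
    have h4 := h0 n
    calc |g n x| = |(g n x - g n 0) + g n 0| := by congr 1; ring
      _ ≤ |g n x - g n 0| + |g n 0| := abs_add_le _ _
      _ ≤ C + 1 := by linarith
  have hqb : ∀ n, ∀ x ∈ Icc (0:ℝ) 1, |q n x| ≤ C + 2 := by
    intro n x hx
    have h1 := hpb n x hx
    have h2 := abs_le.mp (hgb n x hx)
    have : q n x = p n x - g n x := rfl
    rw [this, abs_le]
    constructor <;> [linarith [h1.1]; linarith [h1.2]]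
  obtain ⟨e, he⟩ := exists_surjective_nat ℚ
  set y : ℕ → ℝ := fun i => max 0 (min ((e i : ℚ) : ℝ) 1) with hydef
  have hy01 : ∀ i, y i ∈ Icc (0:ℝ) 1 := fun i =>
    ⟨le_max_left _ _, max_le (by norm_num) (min_le_right _ _)⟩
  have hyhit : ∀ r : ℚ, ∃ i, y i = max 0 (min (r:ℝ) 1) := by
    intro r
    obtain ⟨i, hi⟩ := he r
    exact ⟨i, by simp only [hydef, hi]⟩
  haveI : CompactSpace (Icc (-(C+2):ℝ) (C+2)) :=
    isCompact_iff_compactSpace.mp isCompact_Icc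
  have hmemp : ∀ n i, p n (y i) ∈ Icc (-(C+2):ℝ) (C+2) := by
    intro n i
    have h := hpb n (y i) (hy01 i)
    constructor <;> [linarith [h.1]; linarith [h.2]]
  have hmemq : ∀ n i, q n (y i) ∈ Icc (-(C+2):ℝ) (C+2) := by
    intro n i
    have h := abs_le.mp (hqb n (y i) (hy01 i))
    exact ⟨h.1, h.2⟩
  set F : ℕ → (ℕ → Icc (-(C+2):ℝ) (C+2) × Icc (-(C+2):ℝ) (C+2)) :=
    fun n i => (⟨p n (y i), hmemp n i⟩, ⟨q n (y i), hmemq n i⟩) with hFdef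
  obtain ⟨L, φ, hφ, hconv⟩ := CompactSpace.tendsto_subseq F
  set P' : ℕ → ℝ := fun i => ((L i).1 : ℝ) with hP'def
  set Q' : ℕ → ℝ := fun i => ((L i).2 : ℝ) with hQ'def
  have hPc : ∀ i, Tendsto (fun k => p (φ k) (y i)) atTop (𝓝 (P' i)) := by
    intro i
    have h1 : Tendsto (fun k => F (φ k) i) atTop (𝓝 (L i)) :=
      ((continuous_apply i).tendsto L).comp hconv
    have h2 : Tendsto (fun k => (F (φ k) i).1) atTop (𝓝 (L i).1) :=
      ((continuous_fst.tendsto _).comp h1)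
    exact (continuous_subtype_val.tendsto _).comp h2
  have hQc : ∀ i, Tendsto (fun k => q (φ k) (y i)) atTop (𝓝 (Q' i)) := by
    intro i
    have h1 : Tendsto (fun k => F (φ k) i) atTop (𝓝 (L i)) :=
      ((continuous_apply i).tendsto L).comp hconv
    have h2 : Tendsto (fun k => (F (φ k) i).2) atTop (𝓝 (L i).2) :=
      ((continuous_snd.tendsto _).comp h1)
    exact (continuous_subtype_val.tendsto _).comp h2
  have hP'b : ∀ i, -(C+2) ≤ P' i := fun i => (L i).1.2.1
  have hQ'b : ∀ i, -(C+2) ≤ Q' i := fun i => (L i).2.2.1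
  have hPmono : ∀ i j, y i ≤ y j → P' i ≤ P' j := fun i j hij =>
    le_of_tendsto_of_tendsto' (hPc i) (hPc j)
      (fun k => hpmono (φ k) (hy01 i) (hy01 j) hij)
  have hQmono : ∀ i j, y i ≤ y j → Q' i ≤ Q' j := fun i j hij =>
    le_of_tendsto_of_tendsto' (hQc i) (hQc j)
      (fun k => hqmono (φ k) (hy01 i) (hy01 j) hij)
  have hGc : ∀ i, Tendsto (fun k => g (φ k) (y i)) atTop (𝓝 (P' i - Q' i)) := by
    intro i
    have h1 := (hPc i).sub (hQc i)
    have heq : (fun k => g (φ k) (y i)) = fun k => p (φ k) (y i) - q (φ k) (y i) := by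
      funext k
      show g (φ k) (y i) = p (φ k) (y i) - (p (φ k) (y i) - g (φ k) (y i))
      ring
    rw [heq]
    exact h1
  set clip : ℝ → ℝ := fun x => max 0 (min x 1) with hclipdef
  have hclipmono : Monotone clip := fun a b hab =>
    max_le_max le_rfl (min_le_min hab le_rfl)
  have hclipy : ∀ i, clip (y i) = y i := by
    intro i
    have h := hy01 i
    simp only [hclipdef]
    rw [min_eq_left h.2, max_eq_right h.1]
  have hclip1 : ∀ x, clip x ≤ 1 := fun x => max_le zero_le_one (min_le_right _ _)
  -- the extension of the limit on rational points
  set SP : ℝ → Set ℝ := fun x => P' '' {i | clip x ≤ y i} with hSPdef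
  set SQ : ℝ → Set ℝ := fun x => Q' '' {i | clip x ≤ y i} with hSQdef
  obtain ⟨i1, hi1⟩ := hyhit 1
  have hyi1 : y i1 = 1 := by rw [hi1]; norm_num
  have hSPne : ∀ x, (SP x).Nonempty := fun x =>
    ⟨P' i1, i1, by rw [mem_setOf_eq, hyi1]; exact hclip1 x, rfl⟩
  have hSQne : ∀ x, (SQ x).Nonempty := fun x =>
    ⟨Q' i1, i1, by rw [mem_setOf_eq, hyi1]; exact hclip1 x, rfl⟩
  have hSPbdd : ∀ x, BddBelow (SP x) := by
    intro x
    refine ⟨-(C+2), ?_⟩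
    rintro v ⟨i, _, rfl⟩
    exact hP'b i
  have hSQbdd : ∀ x, BddBelow (SQ x) := by
    intro x
    refine ⟨-(C+2), ?_⟩
    rintro v ⟨i, _, rfl⟩
    exact hQ'b i
  set Pf : ℝ → ℝ := fun x => sInf (SP x) with hPfdef
  set Qf : ℝ → ℝ := fun x => sInf (SQ x) with hQfdef
  have hPfmono : Monotone Pf := by
    intro x x' hxx
    apply csInf_le_csInf (hSPbdd x) (hSPne x')
    rintro v ⟨i, hi, rfl⟩
    exact ⟨i, le_trans (hclipmono hxx) hi, rfl⟩
  have hQfmono : Monotone Qf := by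
    intro x x' hxx
    apply csInf_le_csInf (hSQbdd x) (hSQne x')
    rintro v ⟨i, hi, rfl⟩
    exact ⟨i, le_trans (hclipmono hxx) hi, rfl⟩
  have hPfy : ∀ i, Pf (y i) = P' i := by
    intro i
    apply le_antisymm
    · exact csInf_le (hSPbdd _) ⟨i, (hclipy i).le, rfl⟩
    · apply le_csInf (hSPne _)
      rintro v ⟨j, hj, rfl⟩
      exact hPmono i j (le_trans (hclipy i).ge hj)
  have hQfy : ∀ i, Qf (y i) = Q' i := by
    intro i
    apply le_antisymm
    · exact csInf_le (hSQbdd _) ⟨i, (hclipy i).le, rfl⟩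
    · apply le_csInf (hSQne _)
      rintro v ⟨j, hj, rfl⟩
      exact hQmono i j (le_trans (hclipy i).ge hj)
  set glim : ℝ → ℝ := fun x => Pf x - Qf x with hglimdef
  have hPfbv : BoundedVariationOn Pf (Icc (0:ℝ) 1) := by
    have h := (hPfmono.monotoneOn (Icc (0:ℝ) 1)).eVariationOn_le h01 h11
    rw [inter_self] at h
    exact ne_top_of_le_ne_top ENNReal.ofReal_ne_top h
  have hQfbv : BoundedVariationOn Qf (Icc (0:ℝ) 1) := by
    have h := (hQfmono.monotoneOn (Icc (0:ℝ) 1)).eVariationOn_le h01 h11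
    rw [inter_self] at h
    exact ne_top_of_le_ne_top ENNReal.ofReal_ne_top h
  have hglimbv : BoundedVariationOn glim (Icc (0:ℝ) 1) := by
    have h := evar_sub_le Pf Qf (Icc (0:ℝ) 1)
    exact ne_top_of_le_ne_top (ENNReal.add_ne_top.mpr ⟨hPfbv, hQfbv⟩) h
  refine ⟨φ, hφ, glim, hglimbv, ?_⟩
  intro f hf
  obtain ⟨I, hI, hQI⟩ := exists_RS f glim hglimbv hf
  have hJx : ∀ k : ℕ, ∃ J, IsRSIntegral f (g (φ k)) J ∧
      ∀ ε δ : ℝ, 0 ≤ ε → 0 < δ →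
        (∀ x ∈ Icc (0:ℝ) 1, ∀ z ∈ Icc (0:ℝ) 1, |x - z| ≤ δ → |f x - f z| ≤ ε) →
        ∀ (n : ℕ) (t τ : ℕ → ℝ), Part n t → (∀ i < n, t (i + 1) - t i ≤ δ) →
          (∀ i < n, τ i ∈ Icc (t i) (t (i + 1))) →
          |RS f (g (φ k)) n t τ - J| ≤ 2 * ε * Vr (g (φ k)) := fun k =>
    exists_RS f (g (φ k)) (hgtop (φ k)) hf
  choose J hJ1 hJ2 using hJx
  refine ⟨I, J, hI, hJ1, ?_⟩
  rw [Metric.tendsto_atTop]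
  intro ε hε
  set Vg := Vr glim with hVgdef
  have hVgnn : 0 ≤ Vg := Vr_nonneg glim
  set ε' := ε / (2 * Vg + 6) with hε'def
  have hε'pos : 0 < ε' := div_pos hε (by linarith)
  have hkey : ε' * (2 * Vg + 6) = ε := div_mul_cancel₀ ε (by linarith)
  have hkey' : 2 * ε' * Vg + 6 * ε' = ε := by linear_combination hkey
  obtain ⟨δ, hδ, hmod⟩ := exists_modulus hf hε'pos
  set N : ℕ := max 1 ⌈1/δ⌉₊ with hNdef
  have hN1 : 1 ≤ N := le_max_left _ _
  have hNpos : (0:ℝ) < N := by exact_mod_cast lt_of_lt_of_le Nat.one_pos hN1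
  have hNδ : (1:ℝ)/δ ≤ N :=
    (Nat.le_ceil _).trans (by exact_mod_cast le_max_right 1 ⌈1/δ⌉₊)
  set t : ℕ → ℝ := fun i => (i:ℝ)/(N:ℝ) with htdef
  have hPartN : Part N t := by
    refine ⟨by simp [htdef], ?_, ?_⟩
    · simp only [htdef]; rw [div_self hNpos.ne']
    · intro i _
      simp only [htdef]
      rw [div_le_div_iff_of_pos_right hNpos]
      exact_mod_cast Nat.le_succ i
  have hmesh : ∀ i < N, t (i+1) - t i ≤ δ := by
    intro i _
    have h1 : t (i+1) - t i = 1/(N:ℝ) := by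
      simp only [htdef]; push_cast; ring
    rw [h1, div_le_iff₀ hNpos]
    rw [div_le_iff₀ hδ] at hNδ
    nlinarith
  have htag : ∀ i < N, t i ∈ Icc (t i) (t (i+1)) := fun i hi => ⟨le_rfl, hPartN.step i hi⟩
  have hyt : ∀ i : ℕ, ∃ j, y j = clip (t i) := by
    intro i
    obtain ⟨j, hj⟩ := hyhit ((i : ℚ)/(N : ℚ))
    refine ⟨j, ?_⟩
    rw [hj]
    simp only [hclipdef, htdef]
    push_cast
    norm_num
  have hclipt : ∀ i ≤ N, clip (t i) = t i := by
    intro i hi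
    have hmem : t i ∈ Icc (0:ℝ) 1 := hPartN.mem hi
    simp only [hclipdef]
    rw [min_eq_left hmem.2, max_eq_right hmem.1]
  choose jj hjj using hyt
  have hgt : ∀ i ≤ N, Tendsto (fun k => g (φ k) (t i)) atTop (𝓝 (glim (t i))) := by
    intro i hi
    have h1 : y (jj i) = t i := by rw [hjj i, hclipt i hi]
    have h2 := hGc (jj i)
    rw [h1] at h2
    have h3 : glim (t i) = P' (jj i) - Q' (jj i) := by
      simp only [hglimdef]
      rw [← h1, hPfy, hQfy]
    rw [h3]
    exact h2
  have hsum : Tendsto (fun k => RS f (g (φ k)) N t t) atTop (𝓝 (RS f glim N t t)) := by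
    unfold RS
    apply tendsto_finset_sum
    intro i hi
    rw [Finset.mem_range] at hi
    exact tendsto_const_nhds.mul ((hgt (i+1) hi).sub (hgt i hi.le))
  have hev : ∀ᶠ k in atTop, |RS f (g (φ k)) N t t - RS f glim N t t| < ε' := by
    rw [Metric.tendsto_atTop] at hsum
    obtain ⟨K, hK⟩ := hsum ε' hε'pos
    filter_upwards [eventually_ge_atTop K] with k hk
    have := hK k hk
    rwa [Real.dist_eq] at this
  rw [eventually_atTop] at hev
  obtain ⟨K, hK⟩ := hev
  refine ⟨K, fun k hk => ?_⟩
  rw [Real.dist_eq]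
  have e1 : |RS f (g (φ k)) N t t - J k| ≤ 2 * ε' * Vr (g (φ k)) :=
    hJ2 k ε' δ hε'pos.le hδ hmod N t t hPartN hmesh htag
  have e1' : |J k - RS f (g (φ k)) N t t| ≤ 2 * ε' := by
    rw [abs_sub_comm]
    refine e1.trans ?_
    have h5 := hVle1 (φ k)
    have h6 := Vr_nonneg (g (φ k))
    nlinarith [hε'pos.le]
  have e2 := hK k hk
  have e3 : |RS f glim N t t - I| ≤ 2 * ε' * Vg :=
    hQI ε' δ hε'pos.le hδ hmod N t t hPartN hmesh htag
  have tri : |J k - I| ≤ |J k - RS f (g (φ k)) N t t|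
      + |RS f (g (φ k)) N t t - RS f glim N t t| + |RS f glim N t t - I| := by
    calc |J k - I| ≤ |J k - RS f glim N t t| + |RS f glim N t t - I| := abs_sub_le _ _ _
      _ ≤ (|J k - RS f (g (φ k)) N t t| + |RS f (g (φ k)) N t t - RS f glim N t t|)
          + |RS f glim N t t - I| := add_le_add (abs_sub_le _ _ _) le_rfl
  linarith
end

section
/- Let (f_n) be nonnegative measurable functions on a probability space with sup_n ∫ f_n dP < ∞. Then there exist g_n ∈ co{f_m : m ≥ n} and an almost surely finite random variable g such that g_n → g almost surely. -/
open Filter MeasureTheory Finset Topology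
open scoped ENNReal

section Aux
set_option linter.unusedSectionVars false
variable {Ω : Type*} [MeasurableSpace Ω] (f : ℕ → Ω → ℝ)

/-- membership in convex hull of tail -/
def KMem (n : ℕ) (h : Ω → ℝ) : Prop := ∃ (F : Finset ℕ) (w : ℕ → ℝ),
  (∀ i ∈ F, n ≤ i) ∧ (∀ i ∈ F, 0 ≤ w i) ∧ (∑ i ∈ F, w i) = 1 ∧
  h = fun ω => ∑ i ∈ F, w i * f i ω

lemma kmem_self (n : ℕ) : KMem f n (f n) := by
  refine ⟨{n}, fun _ => 1, by simp, by simp, by simp, by simp⟩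

lemma kmem_mono {m n : ℕ} (hmn : m ≤ n) {h : Ω → ℝ} (H : KMem f n h) : KMem f m h := by
  obtain ⟨F, w, h1, h2, h3, h4⟩ := H
  exact ⟨F, w, fun i hi => hmn.trans (h1 i hi), h2, h3, h4⟩

lemma kmem_meas (hmeas : ∀ n, Measurable (f n)) {n : ℕ} {h : Ω → ℝ} (H : KMem f n h) :
    Measurable h := by
  obtain ⟨F, w, _, _, _, rfl⟩ := H
  exact Finset.measurable_sum F (fun i _ => (hmeas i).const_mul _)

lemma kmem_nonneg (hnn : ∀ n ω, 0 ≤ f n ω) {n : ℕ} {h : Ω → ℝ} (H : KMem f n h) :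
    ∀ ω, 0 ≤ h ω := by
  obtain ⟨F, w, _, h2, _, rfl⟩ := H
  exact fun ω => Finset.sum_nonneg fun i hi => mul_nonneg (h2 i hi) (hnn i ω)

lemma kmem_mid {n : ℕ} {h₁ h₂ : Ω → ℝ} (H₁ : KMem f n h₁) (H₂ : KMem f n h₂) :
    KMem f n (fun ω => (h₁ ω + h₂ ω) / 2) := by
  obtain ⟨F₁, w₁, a1, a2, a3, rfl⟩ := H₁
  obtain ⟨F₂, w₂, b1, b2, b3, rfl⟩ := H₂
  have e1 : ∀ (g : ℕ → ℝ), ∑ i ∈ F₁ ∪ F₂, (if i ∈ F₁ then w₁ i else 0) / 2 * g i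
      = (∑ i ∈ F₁, w₁ i * g i) / 2 := by
    intro g
    rw [Finset.sum_div]
    refine (Finset.sum_subset Finset.subset_union_left ?_).symm.trans ?_
    · intro i _ hi; simp [hi]
    · refine Finset.sum_congr rfl fun i hi => ?_; simp [hi]; ring
  have e2 : ∀ (g : ℕ → ℝ), ∑ i ∈ F₁ ∪ F₂, (if i ∈ F₂ then w₂ i else 0) / 2 * g i
      = (∑ i ∈ F₂, w₂ i * g i) / 2 := by
    intro g
    rw [Finset.sum_div]
    refine (Finset.sum_subset Finset.subset_union_right ?_).symm.trans ?_
    · intro i _ hi; simp [hi]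
    · refine Finset.sum_congr rfl fun i hi => ?_; simp [hi]; ring
  refine ⟨F₁ ∪ F₂, fun i => (if i ∈ F₁ then w₁ i else 0) / 2 + (if i ∈ F₂ then w₂ i else 0) / 2,
    ?_, ?_, ?_, ?_⟩
  · intro i hi
    rcases Finset.mem_union.1 hi with hi | hi
    exacts [a1 i hi, b1 i hi]
  · intro i _
    have c1 : (0:ℝ) ≤ (if i ∈ F₁ then w₁ i else 0) := by
      split
      · exact a2 i ‹_›
      · exact le_refl 0
    have c2 : (0:ℝ) ≤ (if i ∈ F₂ then w₂ i else 0) := by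
      split
      · exact b2 i ‹_›
      · exact le_refl 0
    positivity
  · have := e1 (fun _ => 1)
    have := e2 (fun _ => 1)
    simp only [mul_one] at this ‹_›
    simp only [add_mul, Finset.sum_add_distrib]
    calc ∑ i ∈ F₁ ∪ F₂, (if i ∈ F₁ then w₁ i else 0) / 2
          + ∑ i ∈ F₁ ∪ F₂, (if i ∈ F₂ then w₂ i else 0) / 2
        = (∑ i ∈ F₁, w₁ i) / 2 + (∑ i ∈ F₂, w₂ i) / 2 := by
          have h1 := e1 (fun _ => 1); have h2 := e2 (fun _ => 1)
          simp only [mul_one] at h1 h2; rw [h1, h2]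
      _ = 1 := by rw [a3, b3]; norm_num
  · funext ω
    simp only [add_mul, Finset.sum_add_distrib, e1 (fun i => f i ω), e2 (fun i => f i ω)]
    ring

end Aux

section Main
variable {Ω : Type*} [MeasurableSpace Ω] (P : Measure Ω) [IsProbabilityMeasure P]
variable (f : ℕ → Ω → ℝ)

set_option linter.unusedSectionVars false

lemma integrable_of_bound {h : Ω → ℝ} (hm : Measurable h) (hb : ∀ ω, ‖h ω‖ ≤ 1) :
    Integrable h P :=
  (integrable_const 1).mono' hm.aestronglyMeasurable (ae_of_all _ hb)

lemma kmem_lintegral_le (hnn : ∀ n ω, 0 ≤ f n ω) (C : ℝ≥0∞)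
    (hbdd : ∀ n, ∫⁻ ω, ENNReal.ofReal (f n ω) ∂P ≤ C)
    {n : ℕ} {h : Ω → ℝ} (H : KMem f n h) (hmeas : ∀ n, Measurable (f n)) :
    ∫⁻ ω, ENNReal.ofReal (h ω) ∂P ≤ C := by
  obtain ⟨F, w, _, h2, h3, rfl⟩ := H
  have e : ∀ ω, ENNReal.ofReal (∑ i ∈ F, w i * f i ω)
      = ∑ i ∈ F, ENNReal.ofReal (w i) * ENNReal.ofReal (f i ω) := by
    intro ω
    rw [ENNReal.ofReal_sum_of_nonneg (fun i hi => mul_nonneg (h2 i hi) (hnn i ω))]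
    exact Finset.sum_congr rfl fun i hi => ENNReal.ofReal_mul (h2 i hi)
  simp only [e]
  rw [lintegral_finset_sum _ (fun i _ => ((hmeas i).ennreal_ofReal.const_mul _))]
  calc ∑ i ∈ F, ∫⁻ ω, ENNReal.ofReal (w i) * ENNReal.ofReal (f i ω) ∂P
      = ∑ i ∈ F, ENNReal.ofReal (w i) * ∫⁻ ω, ENNReal.ofReal (f i ω) ∂P := by
        exact Finset.sum_congr rfl fun i _ => lintegral_const_mul _ (hmeas i).ennreal_ofReal
    _ ≤ ∑ i ∈ F, ENNReal.ofReal (w i) * C :=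
        Finset.sum_le_sum fun i _ => mul_le_mul_right (hbdd i) _
    _ = (∑ i ∈ F, ENNReal.ofReal (w i)) * C := by rw [Finset.sum_mul]
    _ = C := by
        rw [← ENNReal.ofReal_sum_of_nonneg h2, h3]
        simp

theorem komlos_main (hmeas : ∀ n, Measurable (f n)) (hnn : ∀ n ω, 0 ≤ f n ω)
    (C : ℝ≥0∞) (hC : C ≠ ⊤) (hbdd : ∀ n, ∫⁻ ω, ENNReal.ofReal (f n ω) ∂P ≤ C) :
    ∃ (g : ℕ → Ω → ℝ) (glim : Ω → ℝ),
      (∀ n, KMem f n (g n)) ∧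
      ∀ᵐ ω ∂P, Tendsto (fun n => g n ω) atTop (nhds (glim ω)) := by
  classical
  -- the functional J and the infima s
  set J : (Ω → ℝ) → ℝ := fun h => ∫ ω, Real.exp (-h ω) ∂P with hJ
  set Sv : ℕ → Set ℝ := fun n => {x | ∃ h, KMem f n h ∧ J h = x} with hSv
  have hSne : ∀ n, (Sv n).Nonempty := fun n => ⟨J (f n), f n, kmem_self f n, rfl⟩
  -- basic facts about exp(-h) for h in hull
  have hInt : ∀ {n h}, KMem f n h → Integrable (fun ω => Real.exp (-h ω / 2)) P := by
    intro n h H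
    refine integrable_of_bound P ?_ ?_
    · exact (((kmem_meas f hmeas H).neg).div_const 2).exp
    · intro ω
      rw [Real.norm_eq_abs, abs_of_pos (Real.exp_pos _)]
      refine Real.exp_le_one_iff.2 ?_
      have := kmem_nonneg f hnn H ω
      linarith
  have hInt1 : ∀ {n h}, KMem f n h → Integrable (fun ω => Real.exp (-h ω)) P := by
    intro n h H
    refine integrable_of_bound P ((kmem_meas f hmeas H).neg.exp) ?_
    intro ω
    rw [Real.norm_eq_abs, abs_of_pos (Real.exp_pos _)]
    refine Real.exp_le_one_iff.2 ?_
    have := kmem_nonneg f hnn H ω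
    linarith
  have hJnn : ∀ {n h}, KMem f n h → 0 ≤ J h := by
    intro n h H
    exact integral_nonneg fun ω => (Real.exp_pos _).le
  have hJle1 : ∀ {n h}, KMem f n h → J h ≤ 1 := by
    intro n h H
    calc J h ≤ ∫ _ω, (1:ℝ) ∂P := by
          refine integral_mono (hInt1 H) (integrable_const 1) fun ω => ?_
          refine Real.exp_le_one_iff.2 ?_
          have := kmem_nonneg f hnn H ω
          linarith
      _ = 1 := by simp
  have hbddS : ∀ n, BddBelow (Sv n) := by
    intro n
    exact ⟨0, fun x ⟨h, H, hx⟩ => hx ▸ hJnn H⟩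
  set s : ℕ → ℝ := fun n => sInf (Sv n) with hs
  have hsmono : Monotone s := by
    intro m n hmn
    exact csInf_le_csInf (hbddS m) (hSne n) (fun x ⟨h, H, hx⟩ => ⟨h, kmem_mono f hmn H, hx⟩)
  have hsle1 : ∀ n, s n ≤ 1 :=
    fun n => le_trans (csInf_le (hbddS n) ⟨f n, kmem_self f n, rfl⟩) (hJle1 (kmem_self f n))
  set L : ℝ := ⨆ n, s n with hL
  have hbddR : BddAbove (Set.range s) := ⟨1, by rintro x ⟨n, rfl⟩; exact hsle1 n⟩
  have hsL : ∀ n, s n ≤ L := fun n => le_ciSup hbddR n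
  have hsLlim : Tendsto s atTop (nhds L) := tendsto_atTop_ciSup hsmono hbddR
  -- choose near-optimizers
  have hφex : ∀ n, ∃ h, KMem f n h ∧ J h < s n + 1 / (n + 1) := by
    intro n
    have hpos : (0:ℝ) < 1 / (n + 1) := by positivity
    obtain ⟨x, ⟨h, H, rfl⟩, hx⟩ := exists_lt_of_csInf_lt (hSne n) (by linarith : s n < s n + 1 / (n+1))
    exact ⟨h, H, hx⟩
  choose φ hφmem hφJ using hφex
  -- the Hilbert-space estimate
  have hcross : ∀ n m : ℕ,
      ∫ ω, (Real.exp (-φ n ω / 2) - Real.exp (-φ m ω / 2))^2 ∂P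
        ≤ s n + 1 / (n+1) + (s m + 1 / (m+1)) - 2 * s (min n m) := by
    intro n m
    set mid : Ω → ℝ := fun ω => (φ n ω + φ m ω) / 2 with hmid
    have hmidmem : KMem f (min n m) mid :=
      kmem_mid f (kmem_mono f (min_le_left n m) (hφmem n))
        (kmem_mono f (min_le_right n m) (hφmem m))
    have IA := hInt1 (hφmem n)
    have IB := hInt1 (hφmem m)
    have IC := hInt1 hmidmem
    have hfun : (fun ω => (Real.exp (-φ n ω / 2) - Real.exp (-φ m ω / 2))^2)
        = fun ω => (Real.exp (-φ n ω) + Real.exp (-φ m ω)) - 2 * Real.exp (-mid ω) := by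
      funext ω
      have e1 : Real.exp (-φ n ω / 2) * Real.exp (-φ n ω / 2) = Real.exp (-φ n ω) := by
        rw [← Real.exp_add]; ring_nf
      have e2 : Real.exp (-φ m ω / 2) * Real.exp (-φ m ω / 2) = Real.exp (-φ m ω) := by
        rw [← Real.exp_add]; ring_nf
      have e3 : Real.exp (-φ n ω / 2) * Real.exp (-φ m ω / 2) = Real.exp (-mid ω) := by
        rw [← Real.exp_add]; congr 1; simp only [hmid]; ring
      calc (Real.exp (-φ n ω / 2) - Real.exp (-φ m ω / 2))^2
          = Real.exp (-φ n ω / 2) * Real.exp (-φ n ω / 2)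
            + Real.exp (-φ m ω / 2) * Real.exp (-φ m ω / 2)
            - 2 * (Real.exp (-φ n ω / 2) * Real.exp (-φ m ω / 2)) := by ring
        _ = (Real.exp (-φ n ω) + Real.exp (-φ m ω)) - 2 * Real.exp (-mid ω) := by
            rw [e1, e2, e3]
    rw [hfun]
    have hsplit : ∫ ω, (Real.exp (-φ n ω) + Real.exp (-φ m ω) - 2 * Real.exp (-mid ω)) ∂P
        = (∫ ω, Real.exp (-φ n ω) ∂P) + (∫ ω, Real.exp (-φ m ω) ∂P)
          - 2 * ∫ ω, Real.exp (-mid ω) ∂P := by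
      have IAB : Integrable (fun ω => Real.exp (-φ n ω) + Real.exp (-φ m ω)) P := IA.add IB
      have IC2 : Integrable (fun ω => 2 * Real.exp (-mid ω)) P := IC.const_mul 2
      rw [integral_sub IAB IC2, integral_add IA IB, MeasureTheory.integral_const_mul]
    rw [hsplit]
    have h1 : ∫ ω, Real.exp (-φ n ω) ∂P < s n + 1 / (n+1) := hφJ n
    have h2 : ∫ ω, Real.exp (-φ m ω) ∂P < s m + 1 / (m+1) := hφJ m
    have h3 : s (min n m) ≤ ∫ ω, Real.exp (-mid ω) ∂P :=
      csInf_le (hbddS _) ⟨mid, hmidmem, rfl⟩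
    linarith
  -- Cauchy-type bound
  have hkey : ∀ k : ℕ, ∃ N : ℕ, ∀ n ≥ N, ∀ m ≥ N,
      ∫ ω, (Real.exp (-φ n ω / 2) - Real.exp (-φ m ω / 2))^2 ∂P ≤ (8:ℝ)⁻¹ ^ k := by
    intro k
    have hε : (0:ℝ) < (8:ℝ)⁻¹ ^ k := by positivity
    set ε : ℝ := (8:ℝ)⁻¹ ^ k with hεdef
    have h2 : L - ε/4 < ⨆ n, s n := by rw [← hL]; linarith
    obtain ⟨N₂, hN₂⟩ := exists_lt_of_lt_ciSup h2
    have htend : Tendsto (fun n : ℕ => 1 / ((n:ℝ) + 1)) atTop (nhds 0) :=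
      tendsto_one_div_add_atTop_nhds_zero_nat
    have hev : ∀ᶠ n : ℕ in atTop, 1 / ((n:ℝ) + 1) ≤ ε/4 :=
      htend.eventually (eventually_le_nhds (by positivity))
    obtain ⟨N₁, hN₁⟩ := eventually_atTop.1 hev
    refine ⟨max N₁ N₂, fun n hn m hm => ?_⟩
    have e1 : 1 / ((n:ℝ) + 1) ≤ ε/4 := hN₁ n (le_trans (le_max_left _ _) hn)
    have e2 : 1 / ((m:ℝ) + 1) ≤ ε/4 := hN₁ m (le_trans (le_max_left _ _) hm)
    have e3 : L - ε/4 < s (min n m) :=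
      lt_of_lt_of_le hN₂ (hsmono (le_min (le_trans (le_max_right _ _) hn)
        (le_trans (le_max_right _ _) hm)))
    have e4 : s n ≤ L := hsL n
    have e5 : s m ≤ L := hsL m
    have := hcross n m
    linarith
  choose N hN using hkey
  set nseq : ℕ → ℕ := fun k => k + (Finset.range (k+1)).sup N with hnseq
  have hnseqk : ∀ k, k ≤ nseq k := fun k => Nat.le_add_right _ _
  have hnseqN : ∀ j k, j ≤ k → N j ≤ nseq k := fun j k hjk =>
    le_trans (Finset.le_sup (Finset.mem_range.2 (Nat.lt_succ_of_le hjk))) (Nat.le_add_left _ _)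
  set g : ℕ → Ω → ℝ := fun k => φ (nseq k) with hg
  have hgmem : ∀ k, KMem f k (g k) := fun k => kmem_mono f (hnseqk k) (hφmem (nseq k))
  set V : ℕ → Ω → ℝ := fun k ω => Real.exp (-g k ω / 2) with hV
  have hVmeas : ∀ k, Measurable (V k) :=
    fun k => ((kmem_meas f hmeas (hgmem k)).neg.div_const 2).exp
  have hVbd : ∀ k ω, V k ω ∈ Set.Ioc (0:ℝ) 1 := by
    intro k ω
    constructor
    · exact Real.exp_pos _
    · refine Real.exp_le_one_iff.2 ?_
      have := kmem_nonneg f hnn (hgmem k) ω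
      linarith
  have hD : ∀ k, ∫ ω, (V (k+1) ω - V k ω)^2 ∂P ≤ (8:ℝ)⁻¹ ^ k := by
    intro k
    exact hN k (nseq (k+1)) (hnseqN k (k+1) (Nat.le_succ k)) (nseq k) (hnseqN k k le_rfl)
  -- summability of increments, a.e.
  set d : ℕ → Ω → ℝ := fun k ω => |V (k+1) ω - V k ω| with hd
  have hdmeas : ∀ k, Measurable (d k) := fun k => ((hVmeas (k+1)).sub (hVmeas k)).abs
  have hdnn : ∀ k ω, 0 ≤ d k ω := fun k ω => abs_nonneg _
  have hdptw : ∀ k ω, d k ω ≤ (2:ℝ)⁻¹ ^ k + (2:ℝ)^k * (d k ω)^2 := by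
    intro k ω
    rcases le_or_gt (d k ω) ((2:ℝ)⁻¹ ^ k) with hle | hlt
    · have : (0:ℝ) ≤ (2:ℝ)^k * (d k ω)^2 := by positivity
      linarith
    · have h0 : (0:ℝ) ≤ d k ω := hdnn k ω
      have hmul : (2:ℝ)⁻¹ ^ k * (2:ℝ)^k = 1 := by
        rw [← mul_pow]; norm_num
      have step1 : (2:ℝ)⁻¹ ^ k * d k ω ≤ d k ω * d k ω :=
        mul_le_mul_of_nonneg_right hlt.le h0
      have step2 : (2:ℝ)^k * ((2:ℝ)⁻¹ ^ k * d k ω) ≤ (2:ℝ)^k * (d k ω * d k ω) :=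
        mul_le_mul_of_nonneg_left step1 (by positivity)
      have step3 : (2:ℝ)^k * ((2:ℝ)⁻¹ ^ k * d k ω) = d k ω := by
        rw [← mul_assoc, mul_comm ((2:ℝ)^k), hmul, one_mul]
      have hc : (0:ℝ) ≤ (2:ℝ)⁻¹ ^ k := by positivity
      nlinarith [step2, step3]
  have hdint : ∀ k, Integrable (fun ω => (2:ℝ)^k * (d k ω)^2) P := by
    intro k
    refine (integrable_const ((2:ℝ)^k * 4)).mono'
      ((((hdmeas k).pow_const 2).const_mul _).aestronglyMeasurable) (ae_of_all _ fun ω => ?_)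
    have hb : d k ω ≤ 2 := by
      have h1 := hVbd (k+1) ω
      have h2 := hVbd k ω
      rw [hd]
      rw [abs_le]
      constructor <;> [linarith [h1.1.le, h2.2]; linarith [h2.1.le, h1.2]]
    have h0 := hdnn k ω
    rw [Real.norm_eq_abs, abs_of_nonneg (by positivity)]
    have : (d k ω)^2 ≤ 4 := by nlinarith
    have hp : (0:ℝ) ≤ (2:ℝ)^k := by positivity
    nlinarith
  have hDk : ∀ k, ∫ ω, (2:ℝ)^k * (d k ω)^2 ∂P ≤ (4:ℝ)⁻¹ ^ k := by
    intro k
    have e : ∫ ω, (2:ℝ)^k * (d k ω)^2 ∂P = (2:ℝ)^k * ∫ ω, (d k ω)^2 ∂P :=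
      MeasureTheory.integral_const_mul _ _
    have e2 : ∫ ω, (d k ω)^2 ∂P = ∫ ω, (V (k+1) ω - V k ω)^2 ∂P := by
      refine integral_congr_ae (ae_of_all _ fun ω => ?_)
      rw [hd]; exact sq_abs _
    have e3 : (2:ℝ)^k * (8:ℝ)⁻¹ ^ k = (4:ℝ)⁻¹ ^ k := by
      rw [← mul_pow]; norm_num
    rw [e, e2, ← e3]
    exact mul_le_mul_of_nonneg_left (hD k) (by positivity)
  have hlint : ∀ k, ∫⁻ ω, ENNReal.ofReal (d k ω) ∂P
      ≤ ENNReal.ofReal ((2:ℝ)⁻¹ ^ k) + ENNReal.ofReal ((4:ℝ)⁻¹ ^ k) := by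
    intro k
    calc ∫⁻ ω, ENNReal.ofReal (d k ω) ∂P
        ≤ ∫⁻ ω, (ENNReal.ofReal ((2:ℝ)⁻¹ ^ k) + ENNReal.ofReal ((2:ℝ)^k * (d k ω)^2)) ∂P := by
          refine lintegral_mono fun ω => ?_
          refine le_trans (ENNReal.ofReal_le_ofReal (hdptw k ω)) ENNReal.ofReal_add_le
      _ = ENNReal.ofReal ((2:ℝ)⁻¹ ^ k) + ∫⁻ ω, ENNReal.ofReal ((2:ℝ)^k * (d k ω)^2) ∂P := by
          rw [lintegral_add_left measurable_const]
          simp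
      _ ≤ ENNReal.ofReal ((2:ℝ)⁻¹ ^ k) + ENNReal.ofReal ((4:ℝ)⁻¹ ^ k) := by
          gcongr
          rw [← ofReal_integral_eq_lintegral_ofReal (hdint k)
            (ae_of_all _ fun ω => by positivity)]
          exact ENNReal.ofReal_le_ofReal (hDk k)
  have htsum : ∑' k, ∫⁻ ω, ENNReal.ofReal (d k ω) ∂P ≠ ⊤ := by
    refine ne_top_of_le_ne_top ?_ (ENNReal.tsum_le_tsum hlint)
    rw [ENNReal.tsum_add]
    rw [← ENNReal.ofReal_tsum_of_nonneg (fun k => by positivity)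
      (summable_geometric_of_lt_one (by norm_num) (by norm_num))]
    rw [← ENNReal.ofReal_tsum_of_nonneg (fun k => by positivity)
      (summable_geometric_of_lt_one (by norm_num) (by norm_num))]
    exact ENNReal.add_ne_top.2 ⟨ENNReal.ofReal_ne_top, ENNReal.ofReal_ne_top⟩
  have hsum_ae : ∀ᵐ ω ∂P, Summable (fun k => |V (k+1) ω - V k ω|) := by
    have hmt : Measurable (fun ω => ∑' k, ENNReal.ofReal (d k ω)) :=
      Measurable.ennreal_tsum fun k => (hdmeas k).ennreal_ofReal
    have hfin : ∫⁻ ω, ∑' k, ENNReal.ofReal (d k ω) ∂P ≠ ⊤ := by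
      rw [lintegral_tsum fun k => ((hdmeas k).ennreal_ofReal).aemeasurable]
      exact htsum
    filter_upwards [ae_lt_top hmt hfin] with ω hω
    have hsummable : Summable (fun k => (ENNReal.ofReal (d k ω)).toReal) :=
      ENNReal.summable_toReal hω.ne
    have : (fun k => (ENNReal.ofReal (d k ω)).toReal) = fun k => d k ω := by
      funext k; exact ENNReal.toReal_ofReal (hdnn k ω)
    rw [this] at hsummable
    exact hsummable
  -- a.e. finiteness of liminf
  have hliminf_ae : ∀ᵐ ω ∂P, liminf (fun k => ENNReal.ofReal (g k ω)) atTop < ⊤ := by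
    have hgC : ∀ k, ∫⁻ ω, ENNReal.ofReal (g k ω) ∂P ≤ C :=
      fun k => kmem_lintegral_le P f hnn C hbdd (hgmem k) hmeas
    have hgm : ∀ k, Measurable (fun ω => ENNReal.ofReal (g k ω)) :=
      fun k => (kmem_meas f hmeas (hgmem k)).ennreal_ofReal
    have h1 : ∫⁻ ω, liminf (fun k => ENNReal.ofReal (g k ω)) atTop ∂P ≤ C := by
      refine le_trans (lintegral_liminf_le hgm) ?_
      exact liminf_le_of_frequently_le (Filter.Frequently.of_forall hgC)
    refine ae_lt_top (Measurable.liminf hgm) (ne_top_of_le_ne_top hC h1)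
  -- construct limit
  set glim : Ω → ℝ := fun ω =>
    if h : ∃ l, Tendsto (fun k => V k ω) atTop (nhds l) then -2 * Real.log h.choose else 0
    with hglim
  refine ⟨g, glim, hgmem, ?_⟩
  filter_upwards [hsum_ae, hliminf_ae] with ω hsw hlw
  have hcs : CauchySeq (fun k => V k ω) := by
    refine cauchySeq_of_summable_dist ?_
    have he : (fun n => dist (V n ω) (V (n+1) ω)) = fun n => |V (n+1) ω - V n ω| := by
      funext n; rw [Real.dist_eq, abs_sub_comm]
    rw [he]; exact hsw
  obtain ⟨l, hl⟩ := cauchySeq_tendsto_of_complete hcs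
  set κ := liminf (fun k => ENNReal.ofReal (g k ω)) atTop with hκ
  have hκtop : κ + 1 ≠ ⊤ := ENNReal.add_ne_top.2 ⟨hlw.ne, ENNReal.one_ne_top⟩
  have hfreq : ∃ᶠ k in atTop, ENNReal.ofReal (g k ω) < κ + 1 :=
    frequently_lt_of_liminf_lt (by isBoundedDefault)
      (ENNReal.lt_add_right hlw.ne one_ne_zero)
  set B : ℝ := (κ + 1).toReal with hB
  have hfreq2 : ∃ᶠ k in atTop, V k ω ∈ Set.Ici (Real.exp (-B/2)) := by
    refine hfreq.mono fun k hk => ?_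
    have hgB : g k ω ≤ B := by
      have h1 := ENNReal.toReal_mono hκtop hk.le
      rwa [ENNReal.toReal_ofReal (kmem_nonneg f hnn (hgmem k) ω)] at h1
    rw [hV]
    exact Real.exp_le_exp.2 (by linarith)
  have hlge : Real.exp (-B/2) ≤ l := by
    have hc : l ∈ closure (Set.Ici (Real.exp (-B/2))) :=
      mem_closure_of_frequently_of_tendsto hfreq2 hl
    rwa [IsClosed.closure_eq isClosed_Ici] at hc
  have hlpos : 0 < l := lt_of_lt_of_le (Real.exp_pos _) hlge
  have hlog : Tendsto (fun k => Real.log (V k ω)) atTop (nhds (Real.log l)) :=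
    (Real.continuousAt_log hlpos.ne').tendsto.comp hl
  have hgt : Tendsto (fun k => -2 * Real.log (V k ω)) atTop (nhds (-2 * Real.log l)) :=
    hlog.const_mul (-2)
  have hgeq : (fun k => g k ω) = fun k => -2 * Real.log (V k ω) := by
    funext k; rw [hV]; simp only []; rw [Real.log_exp]; ring
  have hex : ∃ l', Tendsto (fun k => V k ω) atTop (nhds l') := ⟨l, hl⟩
  have hglimval : glim ω = -2 * Real.log l := by
    rw [hglim]
    simp only [dif_pos hex]
    congr 1
    exact congrArg Real.log (tendsto_nhds_unique hex.choose_spec hl)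
  rw [hglimval, hgeq]
  exact hgt

end Main

/-- Komlós-type theorem: if `(fₙ)` are nonnegative measurable functions on a probability
space, bounded in `L¹`, then there are convex combinations `gₙ ∈ co{f_m : m ≥ n}` and an
almost surely finite limit `g` with `gₙ → g` almost surely. -/
theorem stmt18 {Ω : Type*} [MeasurableSpace Ω] (P : Measure Ω) [IsProbabilityMeasure P]
    (f : ℕ → Ω → ℝ) (hmeas : ∀ n, Measurable (f n)) (hnn : ∀ n ω, 0 ≤ f n ω)
    (C : ℝ≥0∞) (hC : C ≠ ⊤) (hbdd : ∀ n, ∫⁻ ω, ENNReal.ofReal (f n ω) ∂P ≤ C) :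
    ∃ (g : ℕ → Ω → ℝ) (glim : Ω → ℝ),
      (∀ n, ∃ (F : Finset ℕ) (w : ℕ → ℝ),
        (∀ i ∈ F, n ≤ i) ∧ (∀ i ∈ F, 0 ≤ w i) ∧ (∑ i ∈ F, w i) = 1 ∧
        g n = fun ω => ∑ i ∈ F, w i * f i ω) ∧
      ∀ᵐ ω ∂P, Tendsto (fun n => g n ω) atTop (nhds (glim ω)) := by
  obtain ⟨g, glim, h1, h2⟩ := komlos_main P f hmeas hnn C hC hbdd
  exact ⟨g, glim, fun n => h1 n, h2⟩
end
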